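/- Let 0 < ν < √(3/2) and let A be the soliton on finite background. Then in each temporal period there are exactly two singular points: the set {τ ∈ [0, 2π/ν) : A(0,τ) = 0} has exactly two elements. (This is because |2(1−ν²)/√(4−2ν²)| < 1 for 0 < ν < √(3/2), so the equation cos(ντ) = 2(1−ν²)/√(4−2ν²) has exactly two solutions per period of length 2π/ν.) -/

import Mathlib

open Real Filter Topology

/-- Benjamin–Feir growth rate `σ = ν√(2−ν²)`. -/
noncomputable def sfbSigma (ν : ℝ) : ℝ := ν * Real.sqrt (2 - ν ^ 2)

/-- Displaced amplitude `G(ξ,τ) = P(ξ)/(Q(ξ) − σ cos(ντ))` of the SFB, with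
`P(ξ) = ν√2·√(2ν²cosh²(σξ) − σ²)` and `Q(ξ) = ν√2·cosh(σξ)`. -/
noncomputable def sfbG (ν ξ τ : ℝ) : ℝ :=
  (ν * Real.sqrt 2 * Real.sqrt (2 * ν ^ 2 * Real.cosh (sfbSigma ν * ξ) ^ 2 - sfbSigma ν ^ 2)) /
  (ν * Real.sqrt 2 * Real.cosh (sfbSigma ν * ξ) - sfbSigma ν * Real.cos (ν * τ))

/-- SFB phase `φ(ξ) = arctan(−(σ/ν²) tanh(σξ))`. -/
noncomputable def sfbPhi (ν ξ : ℝ) : ℝ :=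
  Real.arctan (-(sfbSigma ν / ν ^ 2) * Real.tanh (sfbSigma ν * ξ))

/-- The soliton on finite background: `A(ξ,τ) = e^{−iξ}(G(ξ,τ)e^{iφ(ξ)} − 1)`. -/
noncomputable def sfbA (ν ξ τ : ℝ) : ℂ :=
  Complex.exp (-Complex.I * (ξ : ℂ)) *
    ((sfbG ν ξ τ : ℂ) * Complex.exp (Complex.I * (sfbPhi ν ξ : ℂ)) - 1)

/-!
On the line `ξ = 0` the phase `φ` vanishes and `P(0) = ν√2·ν²`, so `A(0,τ) = G(0,τ) − 1`, which is
zero exactly when `cos (ντ) = c := √2(1−ν²)/√(2−ν²)`. Since `c² < 1 ↔ ν² < 3/2`, the equation has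
the two solutions `ντ = arccos c` and `ντ = 2π − arccos c` in each period.
-/

namespace Real

theorem sep_Ico_two_pi_cos_eq {c : ℝ} (hc₀ : -1 ≤ c) (hc₁ : c < 1) :
    {x ∈ Set.Ico 0 (2 * π) | cos x = c} = {arccos c, 2 * π - arccos c} := by
  have h₀ : 0 < arccos c := arccos_pos.mpr hc₁
  have hπ : arccos c ≤ π := arccos_le_pi c
  ext x
  simp only [Set.mem_ofPred_eq, Set.mem_Ico, Set.mem_insert_iff, Set.mem_singleton_iff]
  constructor
  · rintro ⟨⟨hx₀, hx₂π⟩, rfl⟩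
    rcases le_total x π with hxπ | hπx
    · exact Or.inl (arccos_cos hx₀ hxπ).symm
    · right
      rw [← cos_two_pi_sub, arccos_cos (by linarith) (by linarith)]
      ring
  · have hcos : cos (arccos c) = c := cos_arccos hc₀ hc₁.le
    rintro (rfl | rfl)
    · exact ⟨⟨h₀.le, by linarith [pi_pos]⟩, hcos⟩
    · exact ⟨⟨by linarith, by linarith⟩, by rw [cos_two_pi_sub, hcos]⟩

theorem ncard_sep_Ico_two_pi_cos_eq {c : ℝ} (hc : |c| < 1) :
    {x ∈ Set.Ico 0 (2 * π) | cos x = c}.ncard = 2 := by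
  obtain ⟨hc₀, hc₁⟩ := abs_lt.mp hc
  rw [sep_Ico_two_pi_cos_eq hc₀.le hc₁, Set.ncard_pair]
  linarith [arccos_lt_pi.mpr hc₀]

theorem ncard_sep_Ico_cos_mul_eq {ω c : ℝ} (hω : 0 < ω) (hc : |c| < 1) :
    {t ∈ Set.Ico 0 (2 * π / ω) | cos (ω * t) = c}.ncard = 2 := by
  have hpre : {t ∈ Set.Ico 0 (2 * π / ω) | cos (ω * t) = c} =
      (ω * ·) ⁻¹' {x ∈ Set.Ico 0 (2 * π) | cos x = c} := by
    ext t
    simp only [Set.mem_ofPred_eq, Set.mem_preimage, Set.mem_Ico, lt_div_iff₀' hω,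
      mul_nonneg_iff_of_pos_left hω]
  rw [hpre, Set.ncard_preimage_of_injective_subset_range (mul_right_injective₀ hω.ne'),
    ncard_sep_Ico_two_pi_cos_eq hc]
  exact fun x _ => ⟨x / ω, mul_div_cancel₀ x hω.ne'⟩

end Real

theorem sfbSigma_sq {ν : ℝ} (hν : ν ^ 2 ≤ 2) : sfbSigma ν ^ 2 = ν ^ 2 * (2 - ν ^ 2) := by
  rw [sfbSigma, mul_pow, sq_sqrt (by linarith)]

theorem sfbA_zero_left (ν τ : ℝ) : sfbA ν 0 τ = (sfbG ν 0 τ : ℂ) - 1 := by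
  simp [sfbA, sfbPhi]

theorem sfbG_zero_left {ν : ℝ} (hν : ν ^ 2 ≤ 2) (τ : ℝ) :
    sfbG ν 0 τ = ν * √2 * ν ^ 2 / (ν * √2 - sfbSigma ν * cos (ν * τ)) := by
  have hP : 2 * ν ^ 2 * cosh (sfbSigma ν * 0) ^ 2 - sfbSigma ν ^ 2 = (ν ^ 2) ^ 2 := by
    rw [mul_zero, cosh_zero, sfbSigma_sq hν]
    ring
  rw [sfbG, hP, sqrt_sq (sq_nonneg ν), mul_zero, cosh_zero, mul_one]

/-- The value of `cos (ντ)` at the singular points on the line `ξ = 0`; the paper writes it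
as `2(1−ν²)/√(4−2ν²)`. -/
noncomputable def sfbSingularCos (ν : ℝ) : ℝ := √2 * (1 - ν ^ 2) / √(2 - ν ^ 2)

theorem sfbA_zero_left_eq_zero_iff {ν : ℝ} (hν0 : 0 < ν) (hν2 : ν ^ 2 < 2) (τ : ℝ) :
    sfbA ν 0 τ = 0 ↔ cos (ν * τ) = sfbSingularCos ν := by
  have hσ : 0 < sfbSigma ν := mul_pos hν0 (sqrt_pos.mpr (by linarith))
  have hσc : sfbSigma ν * sfbSingularCos ν = ν * √2 * (1 - ν ^ 2) := by
    have : √(2 - ν ^ 2) ≠ 0 := (sqrt_pos.mpr (by linarith)).ne'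
    rw [sfbSigma, sfbSingularCos]
    field_simp
  rw [sfbA_zero_left, sub_eq_zero, ← Complex.ofReal_one, Complex.ofReal_inj,
    sfbG_zero_left hν2.le]
  constructor
  · intro hG
    have hden : ν * √2 - sfbSigma ν * cos (ν * τ) ≠ 0 := by
      rintro hden
      rw [hden, div_zero] at hG
      exact zero_ne_one hG
    rw [div_eq_one_iff_eq hden] at hG
    apply mul_left_cancel₀ hσ.ne'
    linarith
  · intro hcos
    have hσcos : sfbSigma ν * cos (ν * τ) = ν * √2 * (1 - ν ^ 2) := by rw [hcos, hσc]
    have hnum : 0 < ν * √2 * ν ^ 2 := by positivity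
    rw [div_eq_one_iff_eq (by rw [hσcos]; nlinarith)]
    linarith

theorem abs_sfbSingularCos_lt_one {ν : ℝ} (hν0 : 0 < ν) (hν : ν ^ 2 < 3 / 2) :
    |sfbSingularCos ν| < 1 := by
  have h2 : 0 < 2 - ν ^ 2 := by linarith
  rw [← sq_lt_one_iff_abs_lt_one, sfbSingularCos, div_pow, mul_pow, sq_sqrt zero_le_two,
    sq_sqrt h2.le, div_lt_one h2]
  nlinarith [mul_pos hν0 hν0]

/-- For `0 < ν < √(3/2)`, the SFB has exactly two singular points in
each temporal period: the set `{τ ∈ [0, 2π/ν) | A(0,τ) = 0}` has exactly two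
elements. -/
theorem sfb_two_singular_points_per_period
    (ν : ℝ) (hν0 : 0 < ν) (hν2 : ν < Real.sqrt (3 / 2)) :
    {τ ∈ Set.Ico (0 : ℝ) (2 * Real.pi / ν) | sfbA ν 0 τ = 0}.ncard = 2 := by
  have hνsq : ν ^ 2 < 3 / 2 := (lt_sqrt hν0.le).mp hν2
  have hzero : ∀ τ, sfbA ν 0 τ = 0 ↔ cos (ν * τ) = sfbSingularCos ν :=
    sfbA_zero_left_eq_zero_iff hν0 (by linarith)
  simp_rw [hzero]
  exact ncard_sep_Ico_cos_mul_eq hν0 (abs_sfbSingularCos_lt_one hν0 hνsq)
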